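/- arXiv:2312.13061 — 8 statements merged into one kernel-verified Lean document; each statement's English description precedes it below -/
import Mathlib

section
/- Let G be a connected dappled graph and x a vertex of G. If f1 and f2 are homomorphisms from G to the dappled triangular grid T (preserving edges, hue, and color) with f1(x) = f2(x), then f1 = f2. -/
/-- The (dappled) triangular grid: the infinite graph on `ℤ × ℤ` where `(i₁,j₁)` and `(i₂,j₂)`
are adjacent iff their difference is `±(1,0)`, `±(0,1)` or `±(1,1)`. -/
def TGrid : SimpleGraph (ℤ × ℤ) :=
  SimpleGraph.fromRel (fun v w =>
    (w.1 - v.1, w.2 - v.2) ∈ ({(1,0), (-1,0), (0,1), (0,-1), (1,1), (-1,-1)} : Set (ℤ × ℤ)))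

/-- The hue of a vertex of the triangular grid: `ψ(i,j) = (i+j) mod 3`. -/
def hueT (v : ℤ × ℤ) : ZMod 3 := (v.1 : ZMod 3) + (v.2 : ZMod 3)

/-- The color of a vertex of the triangular grid: `φ(i,j) = (i mod 2, j mod 2)`. -/
def colorT (v : ℤ × ℤ) : ZMod 2 × ZMod 2 := ((v.1 : ZMod 2), (v.2 : ZMod 2))

/-!
A neighbour `b` of a grid vertex `a` is `a + d` for one of the six unit steps `d`, and these six
steps have pairwise distinct (hue, color) pairs. Since hue and color are additive, the hue and
color of `b` determine `d`, hence `b`. So two homomorphisms agreeing at a vertex agree at its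
neighbours, and by connectedness everywhere.
-/

def TGrid.steps : Set (ℤ × ℤ) := {(1,0), (-1,0), (0,1), (0,-1), (1,1), (-1,-1)}

lemma hueT_sub (a b : ℤ × ℤ) : hueT (b - a) = hueT b - hueT a := by
  simp only [hueT, Prod.fst_sub, Prod.snd_sub, Int.cast_sub]
  ring

lemma colorT_sub (a b : ℤ × ℤ) : colorT (b - a) = colorT b - colorT a := by
  simp only [colorT, Prod.fst_sub, Prod.snd_sub, Int.cast_sub, Prod.mk_sub_mk]

lemma TGrid.sub_mem_steps_of_adj {a b : ℤ × ℤ} (h : TGrid.Adj a b) : b - a ∈ TGrid.steps := by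
  obtain ⟨-, h | h⟩ := h
  · exact h
  · simp only [TGrid.steps, Set.mem_insert_iff, Set.mem_singleton_iff, Prod.ext_iff] at h ⊢
    simp only [Prod.fst_sub, Prod.snd_sub]
    omega

lemma TGrid.eq_of_mem_steps_of_hueT_eq_of_colorT_eq {d d' : ℤ × ℤ} (hd : d ∈ TGrid.steps)
    (hd' : d' ∈ TGrid.steps)
    (hhue : hueT d = hueT d') (hcol : colorT d = colorT d') : d = d' := by
  simp only [TGrid.steps, Set.mem_insert_iff, Set.mem_singleton_iff] at hd hd'
  rcases hd with rfl | rfl | rfl | rfl | rfl | rfl <;>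
    rcases hd' with rfl | rfl | rfl | rfl | rfl | rfl <;>
    first | rfl | (revert hhue hcol; decide)

lemma TGrid.eq_of_adj_of_hueT_eq_of_colorT_eq {a b b' : ℤ × ℤ} (h : TGrid.Adj a b)
    (h' : TGrid.Adj a b') (hhue : hueT b = hueT b') (hcol : colorT b = colorT b') : b = b' := by
  have hstep : b - a = b' - a :=
    TGrid.eq_of_mem_steps_of_hueT_eq_of_colorT_eq (TGrid.sub_mem_steps_of_adj h)
      (TGrid.sub_mem_steps_of_adj h')
      (by rw [hueT_sub, hueT_sub, hhue]) (by rw [colorT_sub, colorT_sub, hcol])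
  exact sub_left_inj.mp hstep

theorem hom_to_grid_unique_general {α : Type*} (G : SimpleGraph α)
    (ψ : α → ZMod 3) (φ : α → ZMod 2 × ZMod 2)
    (hconn : G.Connected) (x : α) (f₁ f₂ : α → ℤ × ℤ)
    (hf₁adj : ∀ u v, G.Adj u v → TGrid.Adj (f₁ u) (f₁ v))
    (hf₁hue : ∀ v, hueT (f₁ v) = ψ v) (hf₁col : ∀ v, colorT (f₁ v) = φ v)
    (hf₂adj : ∀ u v, G.Adj u v → TGrid.Adj (f₂ u) (f₂ v))
    (hf₂hue : ∀ v, hueT (f₂ v) = ψ v) (hf₂col : ∀ v, colorT (f₂ v) = φ v)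
    (hx : f₁ x = f₂ x) : f₁ = f₂ := by
  funext v
  have hreach := (G.reachable_iff_reflTransGen x v).mp (hconn.preconnected x v)
  induction hreach with
  | refl => exact hx
  | tail _ hadj ih =>
    exact TGrid.eq_of_adj_of_hueT_eq_of_colorT_eq (hf₁adj _ _ hadj) (ih ▸ hf₂adj _ _ hadj)
      (by rw [hf₁hue, hf₂hue]) (by rw [hf₁col, hf₂col])

/-- Two homomorphisms from a connected dappled graph to the dappled triangular grid that
agree at one vertex are equal. -/
theorem hom_to_grid_unique {α : Type*} (G : SimpleGraph α)
    (ψ : α → ZMod 3) (φ : α → ZMod 2 × ZMod 2)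
    (hψ : ∀ u v, G.Adj u v → ψ u ≠ ψ v) (hφ : ∀ u v, G.Adj u v → φ u ≠ φ v)
    (hconn : G.Connected) (x : α) (f₁ f₂ : α → ℤ × ℤ)
    (hf₁adj : ∀ u v, G.Adj u v → TGrid.Adj (f₁ u) (f₁ v))
    (hf₁hue : ∀ v, hueT (f₁ v) = ψ v) (hf₁col : ∀ v, colorT (f₁ v) = φ v)
    (hf₂adj : ∀ u v, G.Adj u v → TGrid.Adj (f₂ u) (f₂ v))
    (hf₂hue : ∀ v, hueT (f₂ v) = ψ v) (hf₂col : ∀ v, colorT (f₂ v) = φ v)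
    (hx : f₁ x = f₂ x) : f₁ = f₂ :=
  hom_to_grid_unique_general G ψ φ hconn x f₁ f₂ hf₁adj hf₁hue hf₁col hf₂adj hf₂hue hf₂col hx
end

section
/- Define σ(a,(b,c)) = 1 if a = b+c in Z_3 and −1 otherwise, and δ(a,(b,c)) = σ(a,(b,c))·(b,c) ∈ Z×Z, for a ∈ {1,2} and (b,c) ∈ {(0,1),(1,0),(1,1)}. Then for any triangle in a dappled graph, the sum of δ(ψ(v_i)−ψ(v_{i−1}), φ(v_i)−φ(v_{i−1})) over the three edges of the triangle (traversed cyclically) equals (0,0). -/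
/-!
Along a triangle the three hue differences are nonzero and sum to zero in `ℤ/3`, so they are all
equal to one `a`; the three colour differences are nonzero and sum to zero in `(ℤ/2)²`, so they are
exactly its three nonzero elements. Since `δ(a, 0) = 0`, the sum in question is therefore
`∑ b, δ(a, b)`, which vanishes: for `a = 1` it is `(0,1) + (1,0) - (1,1)`, for `a = 2` its negative.
-/

/-- `σ(a,(b,c)) = 1` if `a = b + c` and `-1` otherwise, where `a ∈ {1,2}` and
`(b,c) ∈ {(0,1),(1,0),(1,1)}` are the integer representatives of the hue difference and
the color difference of two adjacent vertices. -/
noncomputable def sigma (a : ZMod 3) (bc : ZMod 2 × ZMod 2) : ℤ :=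
  if (a.val : ℤ) = (bc.1.val : ℤ) + (bc.2.val : ℤ) then 1 else -1

/-- `δ(a,(b,c)) = σ(a,(b,c)) · (b,c) ∈ ℤ × ℤ`. -/
noncomputable def deltaStep (a : ZMod 3) (bc : ZMod 2 × ZMod 2) : ℤ × ℤ :=
  (sigma a bc * (bc.1.val : ℤ), sigma a bc * (bc.2.val : ℤ))

/-- `δ(u,v)` for adjacent vertices `u, v` of a dappled graph. -/
noncomputable def delta {α : Type*} (ψ : α → ZMod 3) (φ : α → ZMod 2 × ZMod 2)
    (u v : α) : ℤ × ℤ :=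
  deltaStep (ψ v - ψ u) (φ v - φ u)

open Finset

theorem ZMod.three_eq_of_add_add_eq_zero {a₁ a₂ a₃ : ZMod 3} (h₁ : a₁ ≠ 0) (h₂ : a₂ ≠ 0)
    (h₃ : a₃ ≠ 0) (h : a₁ + a₂ + a₃ = 0) : a₂ = a₁ ∧ a₃ = a₁ := by
  revert a₁ a₂ a₃
  decide

theorem univ_eq_insert_zero_of_add_add_eq_zero {b₁ b₂ b₃ : ZMod 2 × ZMod 2} (h₁ : b₁ ≠ 0)
    (h₂ : b₂ ≠ 0) (h₃ : b₃ ≠ 0) (h : b₁ + b₂ + b₃ = 0) :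
    (univ : Finset (ZMod 2 × ZMod 2)) = {0, b₁, b₂, b₃} := by
  revert b₁ b₂ b₃
  decide

theorem sum_univ_eq_of_add_add_eq_zero {M : Type*} [AddCommMonoid M]
    {f : ZMod 2 × ZMod 2 → M} (hf : f 0 = 0) {b₁ b₂ b₃ : ZMod 2 × ZMod 2} (h₁ : b₁ ≠ 0)
    (h₂ : b₂ ≠ 0) (h₃ : b₃ ≠ 0) (h : b₁ + b₂ + b₃ = 0) :
    ∑ b, f b = f b₁ + f b₂ + f b₃ := by
  have hb₃ : b₃ = b₁ + b₂ := by
    rw [← CharTwo.neg_eq (b₁ + b₂)]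
    exact eq_neg_of_add_eq_zero_right h
  have h₁₂ : b₁ ≠ b₂ := by
    rintro rfl
    exact h₃ (hb₃.trans (CharTwo.add_self_eq_zero b₁))
  have h₁₃ : b₁ ≠ b₃ := by rw [hb₃]; simpa using h₂
  have h₂₃ : b₂ ≠ b₃ := by rw [hb₃]; simpa using h₁
  rw [univ_eq_insert_zero_of_add_add_eq_zero h₁ h₂ h₃ h, sum_insert, sum_insert, sum_pair h₂₃,
    hf, zero_add, add_assoc] <;> simp [h₁₂, h₁₃, h₁.symm, h₂.symm, h₃.symm]

theorem deltaStep_zero_right (a : ZMod 3) : deltaStep a 0 = 0 := by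
  simp [deltaStep]

theorem sum_deltaStep_eq_zero {a : ZMod 3} (ha : a ≠ 0) : ∑ b, deltaStep a b = 0 := by
  revert a
  decide

/-- Around any triangle of a dappled graph, the sum of the `δ` values of the three
cyclically traversed edges is `(0,0)`. -/
theorem delta_triangle_sum {α : Type*} (G : SimpleGraph α)
    (ψ : α → ZMod 3) (φ : α → ZMod 2 × ZMod 2)
    (hψ : ∀ u v, G.Adj u v → ψ u ≠ ψ v) (hφ : ∀ u v, G.Adj u v → φ u ≠ φ v)
    (v₀ v₁ v₂ : α) (h₀₁ : G.Adj v₀ v₁) (h₁₂ : G.Adj v₁ v₂) (h₂₀ : G.Adj v₂ v₀) :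
    delta ψ φ v₀ v₁ + delta ψ φ v₁ v₂ + delta ψ φ v₂ v₀ = (0, 0) := by
  have hψ' {u v : α} (h : G.Adj u v) : ψ v - ψ u ≠ 0 := sub_ne_zero.mpr (hψ u v h).symm
  have hφ' {u v : α} (h : G.Adj u v) : φ v - φ u ≠ 0 := sub_ne_zero.mpr (hφ u v h).symm
  obtain ⟨hψ₁₂, hψ₂₀⟩ :=
    ZMod.three_eq_of_add_add_eq_zero (hψ' h₀₁) (hψ' h₁₂) (hψ' h₂₀) (by ring)
  have hφ_sum : (φ v₁ - φ v₀) + (φ v₂ - φ v₁) + (φ v₀ - φ v₂) = 0 := by abel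
  simp only [delta]
  rw [hψ₁₂, hψ₂₀, ← sum_univ_eq_of_add_add_eq_zero (deltaStep_zero_right _) (hφ' h₀₁)
    (hφ' h₁₂) (hφ' h₂₀) hφ_sum, sum_deltaStep_eq_zero (hψ' h₀₁)]
  rfl
end

section
/- For every hexagon X of the dappled triangular grid T (the subgraph induced by a vertex and its six neighbors), the hued graph X⁻ (forgetting colors, keeping hues) is a retract of T⁻: there is a hue-preserving graph homomorphism f from T to X which is the identity on X. -/
def gridDirs : Finset (ℤ × ℤ) := {(1,0), (-1,0), (0,1), (0,-1), (1,1), (-1,-1)}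

theorem tGrid_adj_iff_sub_mem {u v : ℤ × ℤ} : TGrid.Adj u v ↔ v - u ∈ gridDirs := by
  simp only [TGrid, SimpleGraph.fromRel_adj, gridDirs, Set.mem_insert_iff, Set.mem_singleton_iff,
    Finset.mem_insert, Finset.mem_singleton, Prod.ext_iff, Prod.fst_sub, Prod.snd_sub, ne_eq]
  omega

theorem eq_or_tGrid_adj_iff_sub_mem {z v : ℤ × ℤ} :
    v = z ∨ TGrid.Adj z v ↔ v - z ∈ insert 0 gridDirs := by
  rw [Finset.mem_insert, sub_eq_zero, tGrid_adj_iff_sub_mem]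

theorem hueT_add (u v : ℤ × ℤ) : hueT (u + v) = hueT u + hueT v := by
  simp only [hueT, Prod.fst_add, Prod.snd_add, Int.cast_add]
  ring

def mod6 : ℤ × ℤ →+ ZMod 6 × ZMod 6 :=
  (Int.castAddHom (ZMod 6)).prodMap (Int.castAddHom (ZMod 6))

abbrev mod3 : ZMod 6 →+* ZMod 3 := ZMod.castHom (by norm_num) (ZMod 3)

theorem hueT_eq_mod3_mod6 (v : ℤ × ℤ) : hueT v = mod3 (mod6 v).1 + mod3 (mod6 v).2 := by
  simp [hueT, mod6]

def hexFold (a : ZMod 6 × ZMod 6) : ℤ × ℤ :=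
  ![![(0,0), (0,1), (-1,0), (0,0), (1,0), (0,-1)],
    ![(1,0), (1,1), (0,0), (0,1), (1,1), (0,0)],
    ![(0,-1), (0,0), (1,0), (1,1), (0,0), (1,0)],
    ![(0,0), (1,0), (0,-1), (0,0), (1,0), (0,-1)],
    ![(-1,-1), (0,-1), (0,0), (1,0), (0,-1), (0,0)],
    ![(-1,0), (0,0), (-1,-1), (0,-1), (0,0), (-1,-1)]] a.1 a.2

theorem hexFold_mem (a : ZMod 6 × ZMod 6) : hexFold a ∈ insert 0 gridDirs := by
  revert a; decide

theorem hexFold_add_sub_mem (a : ZMod 6 × ZMod 6) {d : ℤ × ℤ} (hd : d ∈ gridDirs) :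
    hexFold (a + mod6 d) - hexFold a ∈ gridDirs := by
  revert a d; decide

theorem hueT_hexFold (a : ZMod 6 × ZMod 6) : hueT (hexFold a) = mod3 a.1 + mod3 a.2 := by
  revert a; decide

theorem hexFold_mod6 {d : ℤ × ℤ} (hd : d ∈ insert 0 gridDirs) : hexFold (mod6 d) = d := by
  revert d; decide

def hexRetraction (z v : ℤ × ℤ) : ℤ × ℤ := z + hexFold (mod6 (v - z))

section

variable {z : ℤ × ℤ}

theorem hexRetraction_sub_mem (v : ℤ × ℤ) : hexRetraction z v - z ∈ insert 0 gridDirs := by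
  simpa [hexRetraction] using hexFold_mem (mod6 (v - z))

theorem hexRetraction_adj {u v : ℤ × ℤ} (h : TGrid.Adj u v) :
    TGrid.Adj (hexRetraction z u) (hexRetraction z v) := by
  rw [tGrid_adj_iff_sub_mem] at h ⊢
  have hvu : mod6 (v - z) = mod6 (u - z) + mod6 (v - u) := by
    rw [← map_add, sub_add_sub_cancel']
  simpa [hexRetraction, hvu] using hexFold_add_sub_mem (mod6 (u - z)) h

theorem hueT_hexRetraction (v : ℤ × ℤ) : hueT (hexRetraction z v) = hueT v := by
  rw [hexRetraction, hueT_add, hueT_hexFold, ← hueT_eq_mod3_mod6, ← hueT_add, add_sub_cancel]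

theorem hexRetraction_eq_self {v : ℤ × ℤ} (hv : v - z ∈ insert 0 gridDirs) :
    hexRetraction z v = v := by
  rw [hexRetraction, hexFold_mod6 hv, add_sub_cancel]

end

/-- For every hexagon of the triangular grid (the subgraph induced by a vertex `z` and its
six neighbors), there is a hue-preserving retraction of the grid onto the hexagon. -/
theorem hexagon_retract (z : ℤ × ℤ) :
    ∃ f : ℤ × ℤ → ℤ × ℤ,
      (∀ v, f v = z ∨ TGrid.Adj z (f v)) ∧
      (∀ u v, TGrid.Adj u v → TGrid.Adj (f u) (f v)) ∧
      (∀ v, hueT (f v) = hueT v) ∧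
      (∀ v, (v = z ∨ TGrid.Adj z v) → f v = v) :=
  ⟨hexRetraction z,
    fun v => eq_or_tGrid_adj_iff_sub_mem.2 (hexRetraction_sub_mem v),
    fun _ _ => hexRetraction_adj,
    hueT_hexRetraction,
    fun _ hv => hexRetraction_eq_self (eq_or_tGrid_adj_iff_sub_mem.1 hv)⟩
end

section
/- The topological retract of a walk in a graph is unique: it does not depend on the choice or order of the one-step retraction operations performed. -/
/-!
Two one-step retractions of the same walk can always be rejoined by at most one further
retraction on each side: if the deleted segments are disjoint the two retractions commute;
if they overlap in `x y x y` both give the same walk; if they overlap in `x y x b x` both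
sides retract to `x`. By the Church–Rosser lemma this local diamond makes retraction
confluent, and two walks without retractable segments that have a common descendant must
already be equal.
-/

/-- One-step retraction of a walk: delete a retractable segment `x y x`, keeping the first `x`. -/
def WalkStep {V : Type*} (w w' : List V) : Prop :=
  ∃ l₁ x y l₂, w = l₁ ++ x :: y :: x :: l₂ ∧ w' = l₁ ++ x :: l₂

/-- A walk admits no one-step retraction. -/
def WalkReduced {V : Type*} (w : List V) : Prop := ∀ w', ¬ WalkStep w w'

/-- One-step retraction of a closed walk (given as a cyclic sequence, i.e. a list up to
rotation): delete a cyclically retractable segment `x y x`; a closed walk of length two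
retracts to the empty closed walk. -/
def CycStep {V : Type*} (w w' : List V) : Prop :=
  (∃ n x y l, w.rotate n = x :: y :: x :: l ∧ w' = x :: l) ∨
  (∃ x y, w = [x, y] ∧ w' = [])

/-- A closed walk admits no one-step retraction. -/
def CycReduced {V : Type*} (w : List V) : Prop := ∀ w', ¬ CycStep w w'

/-- A closed walk is null-homotopic if it reduces to the empty closed walk by
one-step retractions. -/
def NullHomotopic {V : Type*} (w : List V) : Prop := Relation.ReflTransGen CycStep w []

open Relation

namespace WalkStep

variable {V : Type*}

theorem append_left {w w' : List V} (h : WalkStep w w') (l : List V) :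
    WalkStep (l ++ w) (l ++ w') := by
  obtain ⟨l₁, x, y, l₂, rfl, rfl⟩ := h
  exact ⟨l ++ l₁, x, y, l₂, by simp, by simp⟩

theorem reflGen_append_left {w w' : List V} (h : ReflGen WalkStep w w') (l : List V) :
    ReflGen WalkStep (l ++ w) (l ++ w') := by
  cases h with
  | refl => exact .refl
  | single h => exact .single (h.append_left l)

theorem join_of_cons_eq_append {x y a b : V} {l m t : List V}
    (h : x :: y :: x :: l = t ++ a :: b :: a :: m) :
    Join (ReflGen WalkStep) (x :: l) (t ++ a :: m) := by
  match t, h with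
  | [], h =>
    obtain ⟨rfl, -, -, rfl⟩ := by simpa using h
    exact ⟨x :: l, .refl, .refl⟩
  | [_], h =>
    obtain ⟨rfl, rfl, rfl, rfl⟩ := by simpa using h
    exact ⟨x :: y :: m, .refl, .refl⟩
  | [_, _], h =>
    obtain ⟨rfl, rfl, rfl, rfl⟩ := by simpa using h
    exact ⟨x :: m, .single ⟨[], x, b, m, rfl, rfl⟩, .single ⟨[], x, y, m, rfl, rfl⟩⟩
  | _ :: _ :: _ :: t, h =>
    obtain ⟨rfl, rfl, rfl, rfl⟩ := by simpa using h
    exact ⟨x :: t ++ a :: m, .single ⟨x :: t, a, b, m, by simp, by simp⟩,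
      .single ⟨[], x, y, t ++ a :: m, rfl, rfl⟩⟩

theorem join_of_length_le {l₁ l₂ m₁ m₂ : List V} {x y a b : V}
    (hlen : l₁.length ≤ m₁.length) (h : l₁ ++ x :: y :: x :: l₂ = m₁ ++ a :: b :: a :: m₂) :
    Join (ReflGen WalkStep) (l₁ ++ x :: l₂) (m₁ ++ a :: m₂) := by
  obtain ⟨t, rfl⟩ : l₁ <+: m₁ := List.prefix_of_prefix_length_le ⟨_, rfl⟩ ⟨_, h.symm⟩ hlen
  rw [List.append_assoc] at h
  obtain ⟨d, hl, hm⟩ := join_of_cons_eq_append (List.append_cancel_left h)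
  exact ⟨l₁ ++ d, reflGen_append_left hl l₁, by simpa using reflGen_append_left hm l₁⟩

theorem join {w u v : List V} (hu : WalkStep w u) (hv : WalkStep w v) :
    Join (ReflGen WalkStep) u v := by
  obtain ⟨l₁, x, y, l₂, rfl, rfl⟩ := hu
  obtain ⟨m₁, a, b, m₂, h, rfl⟩ := hv
  rcases le_total l₁.length m₁.length with hlen | hlen
  · exact join_of_length_le hlen h
  · exact symm (join_of_length_le hlen h.symm)

theorem join_reflTransGen {w u v : List V} (hu : ReflTransGen WalkStep w u)
    (hv : ReflTransGen WalkStep w v) : Join (ReflTransGen WalkStep) u v :=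
  church_rosser (fun _ _ _ hb hc ↦
    let ⟨d, hbd, hcd⟩ := join hb hc
    ⟨d, hbd, reflGen_le_reflTransGen _ _ hcd⟩) hu hv

end WalkStep

theorem WalkReduced.eq_of_reflTransGen {V : Type*} {r d : List V} (hr : WalkReduced r)
    (h : ReflTransGen WalkStep r d) : r = d := by
  rcases h.cases_head with rfl | ⟨c, hc, -⟩
  · rfl
  · exact absurd hc (hr c)

theorem walk_retract_unique_general {V : Type*} (w r₁ r₂ : List V)
    (h₁ : Relation.ReflTransGen WalkStep w r₁) (h₂ : Relation.ReflTransGen WalkStep w r₂)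
    (hr₁ : WalkReduced r₁) (hr₂ : WalkReduced r₂) : r₁ = r₂ := by
  obtain ⟨d, hd₁, hd₂⟩ := WalkStep.join_reflTransGen h₁ h₂
  rw [hr₁.eq_of_reflTransGen hd₁, hr₂.eq_of_reflTransGen hd₂]

/-- The topological retract of a walk is unique: any two walks with no retractable segment
obtained from a given walk of a graph by one-step retractions coincide. -/
theorem walk_retract_unique {V : Type*} (G : SimpleGraph V) (w r₁ r₂ : List V)
    (hw : w.Chain' G.Adj)
    (h₁ : Relation.ReflTransGen WalkStep w r₁) (h₂ : Relation.ReflTransGen WalkStep w r₂)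
    (hr₁ : WalkReduced r₁) (hr₂ : WalkReduced r₂) : r₁ = r₂ :=
  walk_retract_unique_general w r₁ r₂ h₁ h₂ hr₁ hr₂
end

section
/- The topological retract of a closed walk in a graph is unique, independent of the choice and order of one-step retraction operations. -/
/-- The cyclically consecutive pairs of a list, representing the edges of a closed walk. -/
def cyclicPairs {V : Type*} (l : List V) : List (V × V) := l.zip (l.rotate 1)

/-- `l` is (the cyclic vertex sequence of) a closed walk in `G`. -/
def IsClosedWalk {V : Type*} (G : SimpleGraph V) (l : List V) : Prop :=
  l ≠ [] ∧ ∀ p ∈ cyclicPairs l, G.Adj p.1 p.2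

open Classical in
/-- The number of times the closed walk `l` traverses the edge `{u, v}` (in either direction). -/
noncomputable def edgeCount {V : Type*} (l : List V) (u v : V) : ℕ :=
  ((cyclicPairs l).filter (fun p => p = (u, v) ∨ p = (v, u))).length

/-- A combinatorial model of a connected plane graph: a connected finite simple graph together
with a distinguished outer face and a list of internal faces, each given by its boundary
closed walk, such that every edge is traversed exactly twice in total by the face boundaries. -/
structure PlanePatch (V : Type*) where
  finV : Finite V
  G : SimpleGraph V
  conn : G.Connected
  outer : List V
  inner : List (List V)
  outer_walk : IsClosedWalk G outer
  inner_walk : ∀ F ∈ inner, IsClosedWalk G F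
  edge_twice : ∀ u v, G.Adj u v →
    edgeCount outer u v + (inner.map (fun F => edgeCount F u v)).sum = 2

/-!
Any two one-step retractions of a cyclic sequence can be joined by at most one further step on
each side: two retractable segments `xyx` and `uvu` either overlap, and then the two results
agree up to rotation or both retract once more to a common sequence, or they are disjoint and
the two retractions commute. By the Church–Rosser lemma retraction of cyclic sequences is then
confluent, and a reduced sequence admits no further step, so two retracts coincide as cyclic
sequences.
-/

open Relation

theorem List.isRotated_iff_exists_append {α : Type*} {l l' : List α} :
    l ~r l' ↔ ∃ s t, l = s ++ t ∧ l' = t ++ s := by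
  constructor
  · rintro ⟨n, rfl⟩
    exact ⟨l.take (n % l.length), l.drop (n % l.length), (l.take_append_drop _).symm,
      List.rotate_eq_drop_append_take_mod⟩
  · rintro ⟨s, t, rfl, rfl⟩
    exact List.isRotated_append

namespace CycStep

variable {V : Type*}

theorem of_isRotated_left {w w' a : List V} (h : w ~r w') (hs : CycStep w' a) :
    CycStep w a := by
  obtain ⟨n, rfl⟩ := h
  rcases hs with ⟨k, x, y, l, hk, rfl⟩ | ⟨x, y, hw, rfl⟩
  · exact Or.inl ⟨n + k, x, y, l, by rw [← List.rotate_rotate, hk], rfl⟩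
  · obtain ⟨p, q, rfl⟩ : ∃ p q, w = [p, q] :=
      List.length_eq_two.mp (by simpa using congrArg List.length hw)
    exact Or.inr ⟨p, q, rfl, rfl⟩

end CycStep

def CycleStep {V : Type*} (c d : Cycle V) : Prop :=
  ∃ w a : List V, CycStep w a ∧ (w : Cycle V) = c ∧ (a : Cycle V) = d

namespace CycleStep

variable {V : Type*}

theorem of_cycStep {w a : List V} (h : CycStep w a) : CycleStep (w : Cycle V) a :=
  ⟨w, a, h, rfl, rfl⟩

theorem coe_left_iff {w : List V} {d : Cycle V} :
    CycleStep (w : Cycle V) d ↔ ∃ a, CycStep w a ∧ (a : Cycle V) = d := by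
  constructor
  · rintro ⟨w', a, hs, hw, rfl⟩
    exact ⟨a, CycStep.of_isRotated_left (Cycle.coe_eq_coe.mp hw.symm) hs, rfl⟩
  · rintro ⟨a, hs, rfl⟩
    exact of_cycStep hs

theorem append_cons (l₁ l₂ : List V) (x y : V) :
    CycleStep (↑(l₁ ++ x :: y :: x :: l₂) : Cycle V) ↑(l₁ ++ x :: l₂) := by
  refine ⟨l₁ ++ x :: y :: x :: l₂, x :: l₂ ++ l₁, Or.inl ⟨l₁.length, x, y, l₂ ++ l₁, ?_, rfl⟩,
    rfl, Cycle.coe_eq_coe.mpr List.isRotated_append⟩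
  exact List.rotate_append_length_eq l₁ (x :: y :: x :: l₂)

theorem pair_nil (x y : V) : CycleStep (↑[x, y] : Cycle V) ↑([] : List V) :=
  of_cycStep (Or.inr ⟨x, y, rfl, rfl⟩)

/-- The word is `x y x l` with `l ++ [x, y] = v x k`: the segment `x v x` starts at the last
letter of `x y x`. -/
theorem join_of_shift_two {x y v : V} {l k : List V} (h : v :: x :: k = l ++ [x, y]) :
    Join (ReflGen CycleStep) (↑(x :: l) : Cycle V) ↑(x :: k) := by
  match l, h with
  | [], h =>
    obtain ⟨rfl, rfl, rfl⟩ : v = x ∧ x = y ∧ k = [] := by simpa using h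
    exact ⟨_, .refl, .refl⟩
  | [z], h =>
    obtain ⟨rfl, rfl⟩ : v = z ∧ k = [y] := by simpa using h
    exact ⟨_, .single (pair_nil x v), .single (pair_nil x y)⟩
  | z :: x' :: l', h =>
    obtain ⟨rfl, rfl, rfl⟩ : v = z ∧ x = x' ∧ k = l' ++ [x, y] := by simpa using h
    have hk : (↑(x :: (l' ++ [x, y])) : Cycle V) = ↑(x :: y :: x :: l') :=
      Cycle.coe_eq_coe.mpr (by simpa using List.isRotated_append (l := x :: l') (l' := [x, y]))
    refine ⟨↑(x :: l'), .single (append_cons [] l' x v), .single ?_⟩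
    rw [hk]
    exact append_cons [] l' x y

theorem join_of_disjoint (l₁ l₂ : List V) (x y u v : V) :
    Join (ReflGen CycleStep)
      (↑(x :: l₁ ++ u :: v :: u :: l₂) : Cycle V) ↑(u :: l₂ ++ x :: y :: x :: l₁) :=
  ⟨↑(x :: l₁ ++ u :: l₂), .single (append_cons _ _ _ _), by
    rw [Cycle.coe_eq_coe.mpr (List.isRotated_append (l := x :: l₁) (l' := u :: l₂))]
    exact .single (append_cons _ _ _ _)⟩

/-- Local confluence when the second segment starts at most two places after the first. -/
theorem join_of_append_of_length_le_two {x y u v : V} {l k s t : List V}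
    (h₁ : x :: y :: x :: l = s ++ t) (h₂ : u :: v :: u :: k = t ++ s) (hs : s.length ≤ 2) :
    Join (ReflGen CycleStep) (↑(x :: l) : Cycle V) ↑(u :: k) := by
  rcases s with _ | ⟨a, _ | ⟨b, _ | ⟨c, s⟩⟩⟩
  · simp only [List.nil_append, List.append_nil] at h₁ h₂
    subst h₁
    simp only [List.cons.injEq] at h₂
    obtain ⟨rfl, -, -, rfl⟩ := h₂
    exact ⟨_, .refl, .refl⟩
  · obtain ⟨rfl, rfl⟩ : x = a ∧ t = y :: x :: l := by simpa [eq_comm] using h₁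
    obtain ⟨rfl, -, hk⟩ : u = y ∧ v = x ∧ u :: k = l ++ [x] := by simpa using h₂
    refine ⟨↑(x :: l), .refl, ?_⟩
    rw [hk, Cycle.coe_eq_coe.mpr (List.isRotated_concat x l)]
  · obtain ⟨rfl, rfl, rfl⟩ : x = a ∧ y = b ∧ t = x :: l := by simpa [eq_comm] using h₁
    obtain ⟨rfl, hk⟩ : u = x ∧ v :: u :: k = l ++ [x, y] := by simpa using h₂
    exact join_of_shift_two hk
  · simp at hs

theorem join_of_isRotated {x y u v : V} {l k : List V}
    (h : x :: y :: x :: l ~r u :: v :: u :: k) :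
    Join (ReflGen CycleStep) (↑(x :: l) : Cycle V) ↑(u :: k) := by
  obtain ⟨s, t, h₁, h₂⟩ := List.isRotated_iff_exists_append.mp h
  by_cases hs : s.length ≤ 2
  · exact join_of_append_of_length_le_two h₁ h₂ hs
  by_cases ht : t.length ≤ 2
  · obtain ⟨d, hd₁, hd₂⟩ := join_of_append_of_length_le_two h₂ h₁ ht
    exact ⟨d, hd₂, hd₁⟩
  rcases s with _ | ⟨_, _ | ⟨_, _ | ⟨_, s⟩⟩⟩ <;> try simp at hs
  rcases t with _ | ⟨_, _ | ⟨_, _ | ⟨_, t⟩⟩⟩ <;> try simp at ht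
  simp only [List.cons_append, List.cons.injEq] at h₁ h₂
  obtain ⟨rfl, rfl, rfl, rfl⟩ := h₁
  obtain ⟨rfl, rfl, rfl, rfl⟩ := h₂
  exact join_of_disjoint s t _ _ _ _

theorem join_of_cycStep {w a b : List V} (ha : CycStep w a) (hb : CycStep w b) :
    Join (ReflGen CycleStep) (a : Cycle V) b := by
  rcases ha with ⟨n, x, y, l, hn, rfl⟩ | ⟨x, y, rfl, rfl⟩ <;>
    rcases hb with ⟨m, u, v, k, hm, rfl⟩ | ⟨u, v, hw, rfl⟩
  · refine join_of_isRotated (y := y) (v := v) ?_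
    rw [← hn, ← hm]
    exact (List.IsRotated.forall w n).trans (List.IsRotated.forall w m).symm
  · simpa [hw] using congrArg List.length hn
  · simpa using congrArg List.length hm
  · exact ⟨_, .refl, .refl⟩

theorem join_reflGen {c a b : Cycle V} (ha : CycleStep c a) (hb : CycleStep c b) :
    Join (ReflGen CycleStep) a b := by
  obtain ⟨w, a, hwa, rfl, rfl⟩ := ha
  obtain ⟨b, hwb, rfl⟩ := coe_left_iff.mp hb
  exact join_of_cycStep hwa hwb

theorem not_of_cycReduced {r : List V} (hr : CycReduced r) (d : Cycle V) :
    ¬ CycleStep (r : Cycle V) d := fun h ↦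
  let ⟨a, ha, _⟩ := coe_left_iff.mp h
  hr a ha

end CycleStep

theorem CycReduced.isRotated_of_reflTransGen {V : Type*} {w r₁ r₂ : List V}
    (h₁ : ReflTransGen CycStep w r₁) (h₂ : ReflTransGen CycStep w r₂)
    (hr₁ : CycReduced r₁) (hr₂ : CycReduced r₂) : r₁ ~r r₂ := by
  have lift {r : List V} (h : ReflTransGen CycStep w r) :
      ReflTransGen CycleStep (w : Cycle V) r :=
    h.lift (fun l : List V ↦ (l : Cycle V)) fun _ _ ↦ CycleStep.of_cycStep
  have normal {r : List V} (hr : CycReduced r) {d : Cycle V}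
      (h : ReflTransGen CycleStep (r : Cycle V) d) : (r : Cycle V) = d :=
    ((reflTransGen_iff_eq (CycleStep.not_of_cycReduced hr)).mp h).symm
  have diamond (c a b : Cycle V) (ha : CycleStep c a) (hb : CycleStep c b) :
      ∃ d, ReflGen CycleStep a d ∧ ReflTransGen CycleStep b d :=
    let ⟨d, hd₁, hd₂⟩ := CycleStep.join_reflGen ha hb
    ⟨d, hd₁, hd₂.to_reflTransGen⟩
  obtain ⟨d, hd₁, hd₂⟩ := church_rosser diamond (lift h₁) (lift h₂)
  exact Cycle.coe_eq_coe.mp ((normal hr₁ hd₁).trans (normal hr₂ hd₂).symm)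

theorem closed_walk_retract_unique_general {V : Type*} (w r₁ r₂ : List V)
    (h₁ : Relation.ReflTransGen CycStep w r₁) (h₂ : Relation.ReflTransGen CycStep w r₂)
    (hr₁ : CycReduced r₁) (hr₂ : CycReduced r₂) : ∃ n, r₂ = r₁.rotate n := by
  obtain ⟨n, hn⟩ := CycReduced.isRotated_of_reflTransGen h₁ h₂ hr₁ hr₂
  exact ⟨n, hn.symm⟩

/-- The topological retract of a closed walk is unique (as a cyclic sequence, i.e. up to
rotation), independent of the choice and order of one-step retractions. -/
theorem closed_walk_retract_unique {V : Type*} (G : SimpleGraph V) (w r₁ r₂ : List V)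
    (hw : IsClosedWalk G w)
    (h₁ : Relation.ReflTransGen CycStep w r₁) (h₂ : Relation.ReflTransGen CycStep w r₂)
    (hr₁ : CycReduced r₁) (hr₂ : CycReduced r₂) : ∃ n, r₂ = r₁.rotate n :=
  closed_walk_retract_unique_general w r₁ r₂ h₁ h₂ hr₁ hr₂
end

section
/- Every non-empty null-homotopic closed walk in a graph has at least two retractable segments. -/
/-- The segment of the closed walk `w` starting at cyclic position `n` is retractable,
i.e. the vertices at cyclic positions `n` and `n+2` coincide. -/
def RetractableAt {V : Type*} (w : List V) (n : ℕ) : Prop :=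
  (w.rotate n)[0]? = (w.rotate n)[2 % w.length]?

section Aux

variable {α : Type*}

lemma rotate_one_eq (a : α) (t : List α) : (a :: t).rotate 1 = t ++ [a] := by
  simpa using List.rotate_cons_succ t a 0

lemma cp_rot1 : ∀ (l : List α), cyclicPairs (l.rotate 1) = (cyclicPairs l).rotate 1
  | [] => rfl
  | [a] => by simp [cyclicPairs]
  | a :: b :: t => by
    have h3 : (b :: t).length = (t ++ [a]).length := by simp
    have e1 : (a :: b :: t).rotate 1 = (b :: t) ++ [a] := rotate_one_eq a (b :: t)
    have e2 : ((b :: t) ++ [a]).rotate 1 = (t ++ [a]) ++ [b] := by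
      show (b :: (t ++ [a])).rotate 1 = (t ++ [a]) ++ [b]
      exact rotate_one_eq b (t ++ [a])
    have lhs : cyclicPairs ((a :: b :: t).rotate 1)
        = (b :: t).zip (t ++ [a]) ++ [(a, b)] := by
      rw [cyclicPairs, e1, e2, List.zip_append h3]
      rfl
    have rhs : cyclicPairs (a :: b :: t) = (a, b) :: (b :: t).zip (t ++ [a]) := by
      rw [cyclicPairs, e1]
      rfl
    rw [lhs, rhs, rotate_one_eq]

lemma cp_rot (l : List α) (n : ℕ) :
    cyclicPairs (l.rotate n) = (cyclicPairs l).rotate n := by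
  induction n with
  | zero => simp
  | succ n ih =>
    have h : l.rotate (n + 1) = (l.rotate n).rotate 1 := by
      rw [List.rotate_rotate]
    rw [h, cp_rot1, ih, List.rotate_rotate]

lemma cp_cons_decomp (x y : α) (l : List α) :
    cyclicPairs (x :: y :: x :: l) = (x, y) :: (y, x) :: cyclicPairs (x :: l) := by
  rw [cyclicPairs, cyclicPairs, rotate_one_eq x l]
  have h : (x :: y :: x :: l).rotate 1 = y :: x :: (l ++ [x]) := by
    simpa using rotate_one_eq x (y :: x :: l)
  rw [h]
  simp

lemma retract_iff (w : List α) (hw : w ≠ []) (m : ℕ) :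
    RetractableAt w m ↔ w[m % w.length]? = w[(m + 2) % w.length]? := by
  have hL : 0 < w.length := List.length_pos_iff.2 hw
  rw [RetractableAt, List.getElem?_rotate hL, List.getElem?_rotate (Nat.mod_lt 2 hL)]
  rw [Nat.zero_add, Nat.mod_add_mod, Nat.add_comm 2 m]

lemma retract_rotate (w : List α) (n j : ℕ) :
    RetractableAt (w.rotate n) j ↔ RetractableAt w ((n + j) % w.length) := by
  unfold RetractableAt
  rw [List.rotate_rotate, List.length_rotate, List.rotate_mod]

lemma main_lemma {V : Type*} : ∀ (L : ℕ) (w : List V), w.length = L →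
    (∀ p ∈ cyclicPairs w, p.1 ≠ p.2) → w ≠ [] → NullHomotopic w →
    ∃ n₁ n₂, n₁ < w.length ∧ n₂ < w.length ∧ n₁ ≠ n₂ ∧
      RetractableAt w n₁ ∧ RetractableAt w n₂ := by
  intro L
  induction L using Nat.strong_induction_on with
  | _ L IH =>
  intro w hL hcd hne hnull
  rcases (Relation.ReflTransGen.cases_head hnull) with heq | ⟨w₁, hstep, hnull₁⟩
  · exact absurd heq hne
  rcases hstep with ⟨n, x, y, l, hrot, hw₁⟩ | ⟨x, y, hw2, -⟩
  swap
  · subst hw2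
    exact ⟨0, 1, by simp, by simp, by omega, by simp [RetractableAt],
      by simp [RetractableAt, rotate_one_eq]⟩
  · subst hw₁
    have hcdu : ∀ p ∈ cyclicPairs (x :: y :: x :: l), p.1 ≠ p.2 := by
      intro p hp
      apply hcd p
      have : p ∈ cyclicPairs (w.rotate n) := by rw [hrot]; exact hp
      rw [cp_rot] at this
      exact (List.mem_rotate).1 this
    rw [cp_cons_decomp] at hcdu
    have hcd1 : ∀ p ∈ cyclicPairs (x :: l), p.1 ≠ p.2 := fun p hp => hcdu p (by simp [hp])
    have hlne : l ≠ [] := by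
      rintro rfl
      exact hcd1 (x, x) (by simp [cyclicPairs]) rfl
    set k := l.length with hkdef
    have hk1 : 1 ≤ k := by
      rcases l with _ | ⟨a, t⟩
      · exact absurd rfl hlne
      · simp [hkdef]
    have hLw : w.length = k + 3 := by
      rw [← List.length_rotate w n, hrot]; simp [hkdef]
    obtain ⟨m₁, m₂, h1, h2, h12, hr1, hr2⟩ :=
      IH (k + 1) (by omega) (x :: l) (by simp [hkdef]) hcd1 (by simp) hnull₁
    simp only [List.length_cons] at h1 h2
    obtain ⟨m, hm, hmk, hrm⟩ : ∃ m, m < k + 1 ∧ m ≠ k ∧ RetractableAt (x :: l) m := by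
      by_cases h : m₁ = k
      · exact ⟨m₂, h2, by omega, hr2⟩
      · exact ⟨m₁, h1, h, hr1⟩
    rw [retract_iff _ (by simp) m] at hrm
    have hlen1 : (x :: l).length = k + 1 := by simp [hkdef]
    rw [hlen1, Nat.mod_eq_of_lt hm] at hrm
    have htrans : ∀ j, (x :: y :: x :: l)[j + 2]? = (x :: l)[j]? := by
      intro j
      cases j with
      | zero => rfl
      | succ j => rfl
    have hune : (x :: y :: x :: l) ≠ [] := by simp
    have hlu : (x :: y :: x :: l).length = k + 3 := by simp [hkdef]
    have hr0 : RetractableAt (w.rotate n) 0 := by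
      rw [hrot, retract_iff _ hune 0, hlu]
      have e1 : 0 % (k + 3) = 0 := Nat.zero_mod _
      have e2 : (0 + 2) % (k + 3) = 2 := Nat.mod_eq_of_lt (by omega)
      rw [e1, e2]
      rfl
    have hrm2 : RetractableAt (w.rotate n) (m + 2) := by
      rw [hrot, retract_iff _ hune (m + 2), hlu]
      have e1 : (m + 2) % (k + 3) = m + 2 := Nat.mod_eq_of_lt (by omega)
      rw [e1]
      by_cases hcase : m + 2 ≤ k
      · have e2 : (m + 2 + 2) % (k + 3) = (m + 2) + 2 := Nat.mod_eq_of_lt (by omega)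
        have e3 : (m + 2) % (k + 1) = m + 2 := Nat.mod_eq_of_lt (by omega)
        rw [e3] at hrm
        rw [e2, htrans m, htrans (m + 2)]
        exact hrm
      · have e2 : (m + 2 + 2) % (k + 3) = 0 := by
          have h : m + 2 + 2 = k + 3 := by omega
          rw [h, Nat.mod_self]
        have e3 : (m + 2) % (k + 1) = 0 := by
          have h : m + 2 = k + 1 := by omega
          rw [h, Nat.mod_self]
        rw [e3] at hrm
        rw [e2, htrans m, hrm]
        rfl
    have ha : RetractableAt w ((n + 0) % w.length) := (retract_rotate w n 0).1 hr0
    have hb : RetractableAt w ((n + (m + 2)) % w.length) := (retract_rotate w n (m + 2)).1 hrm2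
    have hLpos : 0 < w.length := by omega
    refine ⟨(n + 0) % w.length, (n + (m + 2)) % w.length,
      Nat.mod_lt _ hLpos, Nat.mod_lt _ hLpos, ?_, ha, hb⟩
    intro hcontra
    have hmod : n % w.length = (n + (m + 2)) % w.length := by
      simpa using hcontra
    have hdvd : w.length ∣ (n + (m + 2)) - n :=
      (Nat.modEq_iff_dvd' (Nat.le_add_right _ _)).1 hmod
    have : w.length ∣ m + 2 := by simpa using hdvd
    have := Nat.le_of_dvd (by omega) this
    omega

end Aux

/-- Every non-empty null-homotopic closed walk has at least two retractable segments. -/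
theorem two_retractable_segments {V : Type*} (G : SimpleGraph V) (w : List V)
    (hw : IsClosedWalk G w) (hnull : NullHomotopic w) :
    ∃ n₁ n₂, n₁ < w.length ∧ n₂ < w.length ∧ n₁ ≠ n₂ ∧
      RetractableAt w n₁ ∧ RetractableAt w n₂ := by
  exact main_lemma w.length w rfl (fun p hp => (hw.2 p hp).ne) hw.1 hnull
end

section
/- A combination Z of a closed walk W with a null-homotopic closed walk W' is null-homotopic if and only if W is null-homotopic. -/
/-- `z` is a combination of the closed walks `w` and `w'`: an opening of `w'` is inserted
into `w` at an occurrence of their common vertex (closed walks are cyclic sequences,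
so all lists are taken up to rotation). -/
def IsCombination {V : Type*} (z w w' : List V) : Prop :=
  ∃ r n m, (w.rotate n).head? = (w'.rotate m).head? ∧
    z.rotate r = w.rotate n ++ w'.rotate m

namespace CNH

variable {V : Type*}


open Classical in
noncomputable def enc (u v : V) : (V × V) × Bool :=
  if WellOrderingRel u v then ((u, v), true) else ((v, u), false)

lemma enc_swap {u v : V} (h : u ≠ v) : enc v u = ((enc u v).1, !(enc u v).2) := by
  classical
  rcases trichotomous_of WellOrderingRel u v with h1 | h1 | h1
  · have h2 : ¬ WellOrderingRel v u := asymm h1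
    simp [enc, h1, h2]
  · exact absurd h1 h
  · have h2 : ¬ WellOrderingRel u v := asymm h1
    simp [enc, h1, h2]

lemma enc_inj_right {u v w : V} (h : enc u v = enc u w) : v = w := by
  classical
  unfold enc at h
  split_ifs at h with h1 h2 h2 <;>
    simp only [Prod.mk.injEq] at h <;> tauto

lemma rotate_one_cons (a : V) (l : List V) : (a :: l).rotate 1 = l ++ [a] := by
  rw [show (1:ℕ) = 0 + 1 from rfl, List.rotate_cons_succ, List.rotate_zero]

lemma length_cyclicPairs (l : List V) : (cyclicPairs l).length = l.length := by
  simp [cyclicPairs]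

lemma cyclicPairs_rotate (l : List V) (n : ℕ) :
    cyclicPairs (l.rotate n) = (cyclicPairs l).rotate n := by
  unfold cyclicPairs
  rw [List.rotate_rotate, Nat.add_comm, ← List.rotate_rotate, List.zip,
    ← List.zipWith_rotate_distrib _ _ _ n (by simp)]


lemma cyclicPairs_ccc (x y : V) (t : List V) :
    cyclicPairs (x :: y :: x :: t) = (x, y) :: (y, x) :: cyclicPairs (x :: t) := by
  simp [cyclicPairs, rotate_one_cons]

lemma cyclicPairs_cc (a b c : V) (t : List V) :
    cyclicPairs (a :: b :: c :: t) = (a, b) :: (b, c) :: (c :: t).zip (t ++ [a]) := by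
  simp [cyclicPairs, rotate_one_cons]

lemma cyclicPairs_append {a b : List V} (ha : a ≠ []) (hb : b ≠ [])
    (h : a.head? = b.head?) : cyclicPairs (a ++ b) = cyclicPairs a ++ cyclicPairs b := by
  obtain ⟨x, s, rfl⟩ : ∃ x s, a = x :: s := ⟨a.head ha, a.tail, (List.cons_head_tail ha).symm⟩
  obtain ⟨y, u, rfl⟩ : ∃ y u, b = y :: u := ⟨b.head hb, b.tail, (List.cons_head_tail hb).symm⟩
  obtain rfl : x = y := by simpa using h
  unfold cyclicPairs
  rw [rotate_one_cons, rotate_one_cons, show (x :: s) ++ (x :: u) = x :: (s ++ x :: u) by simp,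
    rotate_one_cons]
  rw [show x :: (s ++ x :: u) = (x :: s) ++ (x :: u) by simp,
    show (s ++ x :: u) ++ [x] = (s ++ [x]) ++ (u ++ [x]) by simp,
    List.zip_append (by simp)]





noncomputable def word (l : List V) : List ((V × V) × Bool) :=
  (cyclicPairs l).map (fun p => enc p.1 p.2)

noncomputable def phi (l : List V) : FreeGroup (V × V) := FreeGroup.mk (word l)

def Good (l : List V) : Prop := ∀ p ∈ cyclicPairs l, p.1 ≠ p.2

lemma word_rotate (l : List V) (n : ℕ) : word (l.rotate n) = (word l).rotate n := by
  rw [word, cyclicPairs_rotate, List.map_rotate]; rfl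

lemma mk_rotate_one_iff {α : Type*} (L : List (α × Bool)) (n : ℕ) :
    FreeGroup.mk (L.rotate n) = 1 ↔ FreeGroup.mk L = 1 := by
  rcases eq_or_ne L [] with rfl | hL
  · simp
  · have hpos : 0 < L.length := List.length_pos_iff.2 hL
    have hk : n % L.length ≤ L.length := (Nat.mod_lt _ hpos).le
    rw [← List.rotate_mod, List.rotate_eq_drop_append_take hk, ← FreeGroup.mul_mk,
      show (1 : FreeGroup α) = FreeGroup.mk [] from rfl]
    constructor
    · intro h
      have h2 : FreeGroup.mk (L.drop (n % L.length)) =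
          (FreeGroup.mk (L.take (n % L.length)))⁻¹ := mul_eq_one_iff_eq_inv.1 h
      have h3 : FreeGroup.mk (L.take (n % L.length)) * FreeGroup.mk (L.drop (n % L.length)) = 1 := by
        rw [h2, mul_inv_cancel]
      rwa [FreeGroup.mul_mk, List.take_append_drop] at h3
    · intro h
      have h3 : FreeGroup.mk (L.take (n % L.length)) * FreeGroup.mk (L.drop (n % L.length)) = 1 := by
        rwa [FreeGroup.mul_mk, List.take_append_drop]
      have h2 := mul_eq_one_iff_eq_inv.1 h3
      rw [h2, mul_inv_cancel]; rfl

lemma phi_rotate_iff (l : List V) (n : ℕ) : phi (l.rotate n) = 1 ↔ phi l = 1 := by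
  rw [phi, word_rotate]; exact mk_rotate_one_iff _ _

lemma good_rotate {l : List V} (h : Good l) (n : ℕ) : Good (l.rotate n) := by
  intro p hp
  rw [cyclicPairs_rotate, List.mem_rotate] at hp
  exact h p hp

lemma mk_cancel_cons {α : Type*} (p : α) (b : Bool) (L : List (α × Bool)) :
    FreeGroup.mk ((p, b) :: (p, !b) :: L) = FreeGroup.mk L :=
  Quot.sound (show FreeGroup.Red.Step _ _ from by simpa using @FreeGroup.Red.Step.not α [] L p b)

lemma phi_eq_one_of_null {l : List V} (h : NullHomotopic l) (hg : Good l) : phi l = 1 := by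
  refine Relation.ReflTransGen.head_induction_on
    (motive := fun a (_ : Relation.ReflTransGen CycStep a []) => Good a → phi a = 1) h ?_ ?_ hg
  · intro _; rfl
  · rintro a c (⟨n, x, y, t, hrot, rfl⟩ | ⟨x, y, rfl, rfl⟩) _ ih hga
    · have hgr : Good (a.rotate n) := good_rotate hga n
      rw [hrot] at hgr
      have hxy : x ≠ y := hgr (x, y) (by rw [cyclicPairs_ccc]; exact List.mem_cons_self)
      have hgc : Good (x :: t) := by
        intro p hp
        exact hgr p (by rw [cyclicPairs_ccc]; exact List.mem_cons_of_mem _ (List.mem_cons_of_mem _ hp))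
      have h1 : phi (a.rotate n) = phi (x :: t) := by
        rw [phi, phi, word, word, hrot, cyclicPairs_ccc, List.map_cons, List.map_cons,
          enc_swap hxy]
        exact mk_cancel_cons _ _ _
      rw [← phi_rotate_iff a n, h1]
      exact ih hgc
    · have hxy : x ≠ y := hga (x, y) (by
        rw [show cyclicPairs [x, y] = [(x, y), (y, x)] by simp [cyclicPairs, rotate_one_cons]]
        exact List.mem_cons_self)
      rw [phi, word, show cyclicPairs [x, y] = [(x, y), (y, x)] by
        simp [cyclicPairs, rotate_one_cons], List.map_cons, List.map_cons, List.map_nil,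
        enc_swap hxy]
      exact mk_cancel_cons _ _ _

lemma step_decomp {α : Type*} {W M : List (α × Bool)} (h : FreeGroup.Red.Step W M) :
    ∃ L₁ L₂ p b, W = L₁ ++ (p, b) :: (p, !b) :: L₂ := by
  cases h with
  | not => exact ⟨_, _, _, _, rfl⟩

lemma exists_three {l : List V} (h : 3 ≤ l.length) : ∃ a b c t, l = a :: b :: c :: t := by
  rcases l with _ | ⟨a, _ | ⟨b, _ | ⟨c, t⟩⟩⟩
  · simp at h
  · simp at h
  · simp at h
  · exact ⟨a, b, c, t, rfl⟩

lemma null_of_phi (l : List V) (hg : Good l) (h : phi l = 1) : NullHomotopic l := by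
  have H : ∀ k, ∀ l : List V, l.length = k → Good l → phi l = 1 → NullHomotopic l := by
    intro k
    induction k using Nat.strong_induction_on with
    | _ k ih =>
      intro l hlen hg h
      rcases l with _ | ⟨x, _ | ⟨y, _ | ⟨zz, s⟩⟩⟩
      · exact Relation.ReflTransGen.refl
      · exact absurd rfl (hg (x, x) (by simp [cyclicPairs]))
      · exact Relation.ReflTransGen.single (Or.inr ⟨x, y, rfl, rfl⟩)
      · -- length ≥ 3
        set l : List V := x :: y :: zz :: s with hldef
        have hlen3 : 3 ≤ l.length := by simp [hldef]
        have hW : FreeGroup.mk (word l) = FreeGroup.mk [] := h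
        have hred : FreeGroup.Red (word l) [] := by
          obtain ⟨M, h1, h2⟩ := FreeGroup.Red.exact.1 hW
          rwa [FreeGroup.Red.nil_iff.1 h2] at h1
        have hne : word l ≠ [] := by
          intro e
          have := congrArg List.length e
          simp [word, length_cyclicPairs] at this
        rcases Relation.ReflTransGen.cases_head hred with he | ⟨M, hstep, -⟩
        · exact absurd he hne
        obtain ⟨L₁, L₂, p, b, hdec⟩ := step_decomp hstep
        rw [word] at hdec
        obtain ⟨P₁, rest, hcp, hm1, hm2⟩ := List.map_eq_append_iff.1 hdec
        obtain ⟨q₁, rest1, rfl, hq1, hm3⟩ := List.map_eq_cons_iff.1 hm2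
        obtain ⟨q₂, P₂, rfl, hq2, -⟩ := List.map_eq_cons_iff.1 hm3
        set j := P₁.length with hj
        have hrot0 : cyclicPairs (l.rotate j) = (q₁ :: q₂ :: P₂) ++ P₁ := by
          rw [cyclicPairs_rotate, hcp, hj, List.rotate_append_length_eq]
        have h3r : 3 ≤ (l.rotate j).length := by rwa [List.length_rotate]
        obtain ⟨c0, c1, c2, t, hL⟩ := exists_three h3r
        rw [hL, cyclicPairs_cc] at hrot0
        obtain ⟨hqa, hqb, -⟩ : (c0, c1) = q₁ ∧ (c1, c2) = q₂ ∧ _ :=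
          by simpa using hrot0
        have hgr : Good (l.rotate j) := good_rotate hg j
        rw [hL] at hgr
        have hc01 : c0 ≠ c1 :=
          hgr (c0, c1) (by rw [cyclicPairs_cc]; exact List.mem_cons_self)
        have he1 : enc c0 c1 = (p, b) := by rw [← hqa] at hq1; exact hq1
        have he2 : enc c1 c2 = (p, !b) := by rw [← hqb] at hq2; exact hq2
        have hc2 : c2 = c0 := by
          have : enc c1 c0 = (p, !b) := by rw [enc_swap hc01, he1]
          exact enc_inj_right (he2.trans this.symm)
        rw [hc2] at hL
        have hstepc : CycStep l (c0 :: t) := Or.inl ⟨j, c0, c1, t, hL, rfl⟩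
        have hgr' : Good (c0 :: c1 :: c0 :: t) := by rwa [hc2] at hgr
        have hgc : Good (c0 :: t) := by
          intro q hq
          exact hgr' q (by
            rw [cyclicPairs_ccc]
            exact List.mem_cons_of_mem _ (List.mem_cons_of_mem _ hq))
        have hphi : phi (c0 :: t) = 1 := by
          have h1 : phi (l.rotate j) = phi (c0 :: t) := by
            rw [phi, phi, word, word, hL, cyclicPairs_ccc, List.map_cons, List.map_cons]
            show FreeGroup.mk (enc c0 c1 :: enc c1 c0 :: _) = _
            rw [enc_swap hc01, he1]
            exact mk_cancel_cons _ _ _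
          rw [← h1, phi_rotate_iff]; exact h
        have hlt : (c0 :: t).length < k := by
          have : (l.rotate j).length = l.length := List.length_rotate _ _
          rw [hL] at this
          simp only [List.length_cons] at this ⊢
          omega
        exact Relation.ReflTransGen.head hstepc
          (ih _ hlt (c0 :: t) rfl hgc hphi)
  exact H l.length l rfl hg h


end CNH

/-- A combination of a closed walk `w` with a null-homotopic closed walk `w'` is
null-homotopic if and only if `w` is null-homotopic. -/
theorem combination_nullHomotopic_iff {V : Type*} (G : SimpleGraph V) (z w w' : List V)
    (hw : IsClosedWalk G w) (hw' : IsClosedWalk G w')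
    (hcomb : IsCombination z w w') (hnull : NullHomotopic w') :
    NullHomotopic z ↔ NullHomotopic w := by
  classical
  obtain ⟨r, n, m, hhead, hz⟩ := hcomb
  have hAne : w.rotate n ≠ [] := by
    rw [Ne, List.rotate_eq_nil_iff]; exact hw.1
  have hBne : w'.rotate m ≠ [] := by
    rw [Ne, List.rotate_eq_nil_iff]; exact hw'.1
  have hgw : CNH.Good w := fun p hp => (hw.2 p hp).ne
  have hgw' : CNH.Good w' := fun p hp => (hw'.2 p hp).ne
  have hgz : CNH.Good z := by
    intro q hq
    have hq' : q ∈ cyclicPairs (z.rotate r) := by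
      rw [CNH.cyclicPairs_rotate, List.mem_rotate]; exact hq
    rw [hz, CNH.cyclicPairs_append hAne hBne hhead] at hq'
    rcases List.mem_append.1 hq' with hqa | hqb
    · rw [CNH.cyclicPairs_rotate, List.mem_rotate] at hqa
      exact (hw.2 q hqa).ne
    · rw [CNH.cyclicPairs_rotate, List.mem_rotate] at hqb
      exact (hw'.2 q hqb).ne
  have hphiz : (CNH.phi z = 1) ↔ (CNH.phi w = 1) := by
    rw [← CNH.phi_rotate_iff z r]
    have hsplit : CNH.phi (z.rotate r) =
        CNH.phi (w.rotate n) * CNH.phi (w'.rotate m) := by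
      rw [CNH.phi, CNH.phi, CNH.phi, hz, CNH.word,
        CNH.cyclicPairs_append hAne hBne hhead, List.map_append, FreeGroup.mul_mk]
      rfl
    have hB1 : CNH.phi (w'.rotate m) = 1 :=
      (CNH.phi_rotate_iff _ _).2 (CNH.phi_eq_one_of_null hnull hgw')
    rw [hsplit, hB1, mul_one, CNH.phi_rotate_iff]
  constructor
  · intro hnz
    exact CNH.null_of_phi _ hgw (hphiz.1 (CNH.phi_eq_one_of_null hnz hgz))
  · intro hnw
    exact CNH.null_of_phi _ hgz (hphiz.2 (CNH.phi_eq_one_of_null hnw hgw))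
end

section
/- Let W = u_1,...,u_m be a closed walk, and for some k let W_1 = u_1,u_2,...,u_k and W_2 = u_1,u_m,u_{m−1},...,u_k. Then W is null-homotopic if and only if W_1 and W_2 have the same topological retract. -/
namespace NHAux

variable {V : Type*} [DecidableEq V]

def push (x : V) : List V → List V
  | [] => [x]
  | [y] => [x, y]
  | y :: z :: t => if x = z then z :: t else x :: y :: z :: t

def nf (l : List V) : List V := l.foldr push []

theorem walkReduced_iff {w : List V} :
    WalkReduced w ↔ ∀ (l₁ : List V) (x y : V) (l₂ : List V), w ≠ l₁ ++ x :: y :: x :: l₂ := by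
  constructor
  · intro h l₁ x y l₂ hw
    exact h (l₁ ++ x :: l₂) ⟨l₁, x, y, l₂, hw, rfl⟩
  · rintro h w' ⟨l₁, x, y, l₂, hw, -⟩
    exact h l₁ x y l₂ hw

theorem walkReduced_of_short {w : List V} (h : w.length < 3) : WalkReduced w := by
  rw [walkReduced_iff]
  intro l₁ x y l₂ hw
  apply absurd h
  simp [hw]; omega

theorem walkReduced_tail {a : V} {l : List V} (h : WalkReduced (a :: l)) : WalkReduced l := by
  rw [walkReduced_iff] at h ⊢
  intro l₁ x y l₂ hl
  exact h (a :: l₁) x y l₂ (by simp [hl])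

theorem walkReduced_prefix {s t : List V} (h : WalkReduced (s ++ t)) : WalkReduced s := by
  rw [walkReduced_iff] at h ⊢
  intro l₁ x y l₂ hl
  exact h l₁ x y (l₂ ++ t) (by simp [hl])

theorem walkReduced_cons_cons {x y : V} {l : List V} :
    WalkReduced (x :: y :: l) ↔ l.head? ≠ some x ∧ WalkReduced (y :: l) := by
  constructor
  · intro h
    refine ⟨?_, walkReduced_tail h⟩
    intro hh
    cases l with
    | nil => simp at hh
    | cons a l' =>
      exact walkReduced_iff.mp h [] x y l' (by simp at hh; simp [hh])
  · rintro ⟨h1, h2⟩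
    rw [walkReduced_iff]
    intro l₁ a b l₂ he
    cases l₁ with
    | nil =>
      simp at he
      obtain ⟨rfl, rfl, rfl⟩ := he
      simp at h1
    | cons c l₁' =>
      simp at he
      exact walkReduced_iff.mp h2 l₁' a b l₂ he.2

theorem head?_push (x : V) (l : List V) : (push x l).head? = some x := by
  match l with
  | [] => rfl
  | [y] => rfl
  | y :: z :: t =>
    by_cases h : x = z <;> simp [push, h]

theorem push_ne_nil (x : V) (l : List V) : push x l ≠ [] := by
  intro h
  have := head?_push x l
  rw [h] at this
  simp at this

theorem push_reduced (x : V) {l : List V} (h : WalkReduced l) : WalkReduced (push x l) := by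
  match l with
  | [] => exact walkReduced_of_short (by simp [push])
  | [y] => exact walkReduced_of_short (by simp [push])
  | y :: z :: t =>
    by_cases hx : x = z
    · simp only [push, if_pos hx]
      exact walkReduced_tail h
    · simp only [push, if_neg hx]
      exact walkReduced_cons_cons.mpr ⟨by simp [Ne.symm hx], h⟩

theorem push_push (x y : V) {l : List V} (h : WalkReduced l) :
    push x (push y (push x l)) = push x l := by
  match l with
  | [] => simp [push]
  | [z] =>
    by_cases hyz : y = z
    · simp [push, hyz]
    · simp [push, hyz]
  | z :: w :: t =>
    by_cases hxw : x = w
    · subst hxw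
      simp only [push, if_pos rfl]
      match t with
      | [] => simp [push]
      | a :: t' =>
        by_cases hya : y = a
        · subst hya
          match t' with
          | [] => simp [push]
          | b :: s =>
            by_cases hxb : x = b
            · exfalso
              subst hxb
              exact walkReduced_iff.mp h [z] x y s rfl
            · simp [push, hxb]
        · simp [push, hya]
    · simp only [push, if_neg hxw]
      by_cases hyz : y = z
      · simp [push, hyz, hxw]
      · simp [push, hyz, hxw]

open Relation

theorem walkStep_cons {a : V} {u v : List V} (h : WalkStep u v) : WalkStep (a :: u) (a :: v) := by
  obtain ⟨l₁, x, y, l₂, hu, hv⟩ := h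
  exact ⟨a :: l₁, x, y, l₂, by simp [hu], by simp [hv]⟩

theorem walkStep_append_right {u v : List V} (s : List V) (h : WalkStep u v) :
    WalkStep (u ++ s) (v ++ s) := by
  obtain ⟨l₁, x, y, l₂, hu, hv⟩ := h
  exact ⟨l₁, x, y, l₂ ++ s, by simp [hu], by simp [hv]⟩

theorem rtg_cons {a : V} {u v : List V} (h : ReflTransGen WalkStep u v) :
    ReflTransGen WalkStep (a :: u) (a :: v) :=
  ReflTransGen.lift (a :: ·) (fun _ _ h => walkStep_cons h) _ _ h

theorem rtg_append_right {u v : List V} (s : List V) (h : ReflTransGen WalkStep u v) :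
    ReflTransGen WalkStep (u ++ s) (v ++ s) :=
  ReflTransGen.lift (· ++ s) (fun _ _ h => walkStep_append_right s h) _ _ h

theorem rtg_push (x : V) (l : List V) : ReflTransGen WalkStep (x :: l) (push x l) := by
  match l with
  | [] => exact ReflTransGen.refl
  | [y] => exact ReflTransGen.refl
  | y :: z :: t =>
    by_cases h : x = z
    · subst h
      simp only [push, if_pos rfl]
      exact ReflTransGen.single ⟨[], x, y, t, rfl, rfl⟩
    · simp only [push, if_neg h]
      exact ReflTransGen.refl

theorem nf_cons (x : V) (l : List V) : nf (x :: l) = push x (nf l) := rfl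

theorem nf_reduced (l : List V) : WalkReduced (nf l) := by
  induction l with
  | nil => exact walkReduced_of_short (by simp [nf])
  | cons x l ih => exact push_reduced x ih

theorem nf_fixed {l : List V} (h : WalkReduced l) : nf l = l := by
  induction l with
  | nil => rfl
  | cons x l ih =>
    rw [nf_cons, ih (walkReduced_tail h)]
    match l with
    | [] => rfl
    | [y] => rfl
    | y :: z :: t =>
      have hx : z ≠ x := by
        have := (walkReduced_cons_cons.mp h).1
        simpa using this
      simp [push, Ne.symm hx]

theorem rtg_to_nf (l : List V) : ReflTransGen WalkStep l (nf l) := by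
  induction l with
  | nil => exact ReflTransGen.refl
  | cons x l ih => exact (rtg_cons ih).trans (rtg_push x (nf l))

theorem step_nf_eq {w w' : List V} (h : WalkStep w w') : nf w = nf w' := by
  obtain ⟨l₁, x, y, l₂, rfl, rfl⟩ := h
  show (l₁ ++ x :: y :: x :: l₂).foldr push [] = (l₁ ++ x :: l₂).foldr push []
  rw [List.foldr_append, List.foldr_append]
  congr 1
  exact push_push x y (nf_reduced l₂)

theorem rtg_nf_eq {w w' : List V} (h : ReflTransGen WalkStep w w') : nf w = nf w' := by
  induction h with
  | refl => rfl
  | tail _ h ih => rw [ih, step_nf_eq h]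

theorem nf_eq_of_rtg_red {w r : List V} (h : ReflTransGen WalkStep w r)
    (hr : WalkReduced r) : nf w = r := by
  rw [rtg_nf_eq h, nf_fixed hr]

theorem head?_nf (l : List V) : (nf l).head? = l.head? := by
  cases l with
  | nil => rfl
  | cons x l => rw [nf_cons, head?_push]; rfl

theorem step_getLast? {w w' : List V} (h : WalkStep w w') : w.getLast? = w'.getLast? := by
  obtain ⟨l₁, x, y, l₂, rfl, rfl⟩ := h
  rcases List.eq_nil_or_concat l₂ with rfl | ⟨l₂', e, rfl⟩
  · show (l₁ ++ [x, y, x]).getLast? = (l₁ ++ [x]).getLast?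
    rw [show l₁ ++ [x, y, x] = (l₁ ++ [x, y]) ++ [x] by simp, List.getLast?_concat,
      List.getLast?_concat]
  · simp only [List.concat_eq_append]
    rw [show l₁ ++ x :: y :: x :: (l₂' ++ [e]) = (l₁ ++ x :: y :: x :: l₂') ++ [e] by simp,
      show l₁ ++ x :: (l₂' ++ [e]) = (l₁ ++ x :: l₂') ++ [e] by simp,
      List.getLast?_concat, List.getLast?_concat]

theorem rtg_getLast? {w v : List V} (h : ReflTransGen WalkStep w v) :
    w.getLast? = v.getLast? := by
  induction h with
  | refl => rfl
  | tail _ h ih => rw [ih, step_getLast? h]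

theorem getLast?_nf (l : List V) : (nf l).getLast? = l.getLast? :=
  (rtg_getLast? (rtg_to_nf l)).symm

theorem nf_append_nf_right (a b : List V) : nf (a ++ b) = nf (a ++ nf b) := by
  show (a ++ b).foldr push [] = (a ++ nf b).foldr push []
  rw [List.foldr_append, List.foldr_append]
  congr 1
  exact (nf_fixed (nf_reduced b)).symm

theorem nf_append_nf_left (a b : List V) : nf (a ++ b) = nf (nf a ++ b) :=
  rtg_nf_eq (rtg_append_right b (rtg_to_nf a))

/-- A walk composed with its own reverse retracts to its starting point. -/
theorem nf_cancel (z : V) (t : List V) :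
    nf ((z :: t) ++ (List.reverse (z :: t)).tail) = [z] := by
  induction t generalizing z with
  | nil => simp [nf, push]
  | cons y t' ih =>
    have hrev : (List.reverse (z :: y :: t')).tail
        = (List.reverse (y :: t')).tail ++ [z] := by
      rw [List.reverse_cons]
      rcases List.eq_nil_or_concat (List.reverse (y :: t')) with h | ⟨L, b, h⟩
      · exfalso; simpa using congrArg List.length h
      · rw [h]; cases L <;> simp
    rw [hrev,
      show (z :: y :: t') ++ ((List.reverse (y :: t')).tail ++ [z])
        = z :: (((y :: t') ++ (List.reverse (y :: t')).tail) ++ [z]) by simp,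
      nf_cons, nf_append_nf_left, ih y]
    simp [nf, push]

/-- If a reduced walk `r` becomes trivial after appending `z`, then `r = [z, a]`. -/
theorem reduced_append_singleton_aux {z : V} :
    ∀ (n : ℕ) (r : List V), r.length ≤ n → WalkReduced r → r ≠ [] →
      nf (r ++ [z]) = [z] → ∃ a, r = [z, a] := by
  intro n
  induction n with
  | zero =>
    intro r hlen _ hne _
    exact absurd (List.length_eq_zero_iff.mp (Nat.le_zero.mp hlen)) hne
  | succ n ih =>
  intro r hlen hred hne hnf
  by_cases hrz : WalkReduced (r ++ [z])
  · rw [nf_fixed hrz] at hnf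
    exact absurd (by simpa using congrArg List.length hnf) (by simpa using hne)
  · rw [walkReduced_iff] at hrz
    push_neg at hrz
    obtain ⟨l₁, a, b, l₂, hdec⟩ := hrz
    rcases List.eq_nil_or_concat l₂ with rfl | ⟨l₂', e, rfl⟩
    · -- redex at the very end: r = l₁ ++ [a, b], z = a
      have h2 : r = l₁ ++ [a, b] ∧ [z] = [a] := by
        have := hdec
        rw [show l₁ ++ [a, b, a] = (l₁ ++ [a, b]) ++ [a] by simp] at this
        exact List.append_inj' this (by simp)
      obtain ⟨hr, hz⟩ := h2
      have hza : z = a := by simpa using hz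
      subst hza
      have hstep : nf (l₁ ++ [z]) = [z] :=
        (step_nf_eq (⟨l₁, z, b, [], hdec, rfl⟩ : WalkStep (r ++ [z]) (l₁ ++ [z]))).symm.trans hnf
      cases l₁ with
      | nil => exact ⟨b, by simpa using hr⟩
      | cons c l₁' =>
        have hred' : WalkReduced (c :: l₁') := by
          have hr2 : r = (c :: l₁') ++ [z, b] := by simpa using hr
          exact walkReduced_prefix (hr2 ▸ hred)
        have hlen2 : (c :: l₁').length ≤ n := by
          have := congrArg List.length hr
          simp at this ⊢
          omega
        obtain ⟨a', ha'⟩ := ih _ hlen2 hred' (by simp) hstep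
        exfalso
        have hr3 : r = [] ++ z :: a' :: z :: [b] := by rw [hr, ha']; simp
        exact walkReduced_iff.mp hred [] z a' [b] hr3
    · -- redex strictly inside r: contradicts reducedness of r
      exfalso
      simp only [List.concat_eq_append] at hdec
      rw [show l₁ ++ a :: b :: a :: (l₂' ++ [e]) = (l₁ ++ a :: b :: a :: l₂') ++ [e] by simp]
        at hdec
      have := (List.append_inj' hdec (by simp)).1
      exact walkReduced_iff.mp hred l₁ a b l₂' this

theorem reduced_append_singleton {z : V} (r : List V) (hred : WalkReduced r) (hne : r ≠ [])
    (hnf : nf (r ++ [z]) = [z]) : ∃ a, r = [z, a] :=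
  reduced_append_singleton_aux r.length r le_rfl hred hne hnf

def OpenNull (w : List V) : Prop := nf (w ++ w.take 1) = w.take 1

theorem conj_d1 {y z : V} {c : List V} (hc : c.head? = some z) :
    nf (y :: c) = [y] ↔ nf c = [z, y] := by
  constructor
  · intro h
    rw [nf_cons] at h
    have hh : (nf c).head? = some z := by rw [head?_nf]; exact hc
    match hnfc : nf c with
    | [] => rw [hnfc] at hh; simp at hh
    | [w] =>
      rw [hnfc] at h
      exact absurd (congrArg List.length h) (by simp [push])
    | a :: b :: t =>
      rw [hnfc] at h hh
      by_cases hyb : y = b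
      · subst hyb
        have h' : y :: t = [y] := by simpa [push] using h
        have ht : t = [] := by simpa using h'
        have ha : a = z := by simpa using hh
        rw [ht, ha]
      · simp only [push, if_neg hyb] at h
        exact absurd (congrArg List.length h) (by simp)
  · intro h
    rw [nf_cons, h]
    simp [push]

theorem conj_d2 {y z : V} {c : List V} (hc : c.head? = some z) (hl : c.getLast? = some y) :
    nf c = [z, y] ↔ nf (c ++ [z]) = [z] := by
  constructor
  · intro h
    rw [nf_append_nf_left, h]
    simp [nf, push]
  · intro h
    rw [nf_append_nf_left] at h
    have hne : nf c ≠ [] := by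
      intro h0
      have hh := head?_nf c
      rw [h0, hc] at hh
      simp at hh
    obtain ⟨a, ha⟩ := reduced_append_singleton (nf c) (nf_reduced c) hne h
    have : (nf c).getLast? = some y := by rw [getLast?_nf]; exact hl
    rw [ha] at this
    simp at this
    rw [ha, this]

open List in
theorem openNull_rotate_one (w : List V) : OpenNull w ↔ OpenNull (w.rotate 1) := by
  match w with
  | [] => rfl
  | [y] => simp [rotate_singleton]
  | y :: z :: t' =>
    have hrot : (y :: z :: t').rotate 1 = (z :: t') ++ [y] := by
      rw [show (1:ℕ) = 0 + 1 from rfl, List.rotate_cons_succ, List.rotate_zero]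
    rw [hrot]
    show nf ((y :: z :: t') ++ [y]) = [y] ↔
      nf (((z :: t') ++ [y]) ++ ((z :: t') ++ [y]).take 1) = ((z :: t') ++ [y]).take 1
    have htake : ((z :: t') ++ [y]).take 1 = [z] := by simp
    rw [htake]
    set c : List V := (z :: t') ++ [y] with hc
    have hhead : c.head? = some z := by simp [hc]
    have hlast : c.getLast? = some y := by
      rw [hc, show z :: t' ++ [y] = (z :: t') ++ [y] from rfl, List.getLast?_concat]
    have e1 : ((y :: z :: t') ++ [y]) = y :: c := by simp [hc]
    rw [e1]
    exact (conj_d1 hhead).trans (conj_d2 hhead hlast)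

theorem openNull_rotate (w : List V) (n : ℕ) : OpenNull w ↔ OpenNull (w.rotate n) := by
  induction n with
  | zero => rw [List.rotate_zero]
  | succ n ih =>
    rw [ih, openNull_rotate_one, List.rotate_rotate]

theorem nullHomotopic_openNull {w : List V} (h : NullHomotopic w) : OpenNull w := by
  unfold NullHomotopic at h
  induction h using Relation.ReflTransGen.head_induction_on with
  | refl => rfl
  | head hstep _ ih =>
    rename_i a c _
    rcases hstep with ⟨n, x, y, l, hrot, rfl⟩ | ⟨x, y, rfl, rfl⟩
    · have h1 : OpenNull (a.rotate n) := by
        show nf ((a.rotate n) ++ (a.rotate n).take 1) = (a.rotate n).take 1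
        rw [hrot]
        have hstep2 : WalkStep ((x :: y :: x :: l) ++ [x]) ((x :: l) ++ [x]) :=
          ⟨[], x, y, l ++ [x], by simp, by simp⟩
        have := step_nf_eq hstep2
        show nf (x :: y :: x :: (l ++ [x])) = [x]
        rw [show x :: y :: x :: (l ++ [x]) = (x :: y :: x :: l) ++ [x] by simp, this]
        exact ih
      exact (openNull_rotate a n).mpr h1
    · show nf ([x, y] ++ [x]) = [x]
      simp [nf, push]

/-- A linear redex in the opened closed walk yields a cyclic redex. -/
theorem rot_redex {x : V} {t l₁ : List V} {a b : V} {l₂ : List V}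
    (h : (x :: t) ++ [x] = l₁ ++ a :: b :: a :: l₂) (hm : 3 ≤ (x :: t).length) :
    ∃ (n : ℕ) (l : List V), (x :: t).rotate n = a :: b :: a :: l := by
  rcases List.eq_nil_or_concat l₂ with rfl | ⟨l₂', e, rfl⟩
  · -- the redex sits at the very end
    have h2 : x :: t = l₁ ++ [a, b] ∧ [x] = [a] := by
      rw [show l₁ ++ [a, b, a] = (l₁ ++ [a, b]) ++ [a] by simp] at h
      exact List.append_inj' h (by simp)
    obtain ⟨hw, hx⟩ := h2
    have hxa : x = a := by simpa using hx
    cases l₁ with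
    | nil =>
      exfalso
      have h4 := congrArg List.length hw
      simp at h4 hm
      omega
    | cons c l₁' =>
      have hca : c = a := by
        have h5 := congrArg List.head? hw
        simp [hxa] at h5
        exact h5.symm
      refine ⟨(c :: l₁').length, l₁', ?_⟩
      rw [hw, List.rotate_eq_drop_append_take (by simp), List.drop_left, List.take_left]
      simp [hca, hxa]
  · -- the redex sits strictly inside `x :: t`
    simp only [List.concat_eq_append] at h
    rw [show l₁ ++ a :: b :: a :: (l₂' ++ [e]) = (l₁ ++ a :: b :: a :: l₂') ++ [e] by simp] at h
    have hw : x :: t = l₁ ++ a :: b :: a :: l₂' := (List.append_inj' h (by simp)).1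
    refine ⟨l₁.length, l₂' ++ l₁, ?_⟩
    rw [hw, List.rotate_eq_drop_append_take (by simp), List.drop_left, List.take_left]
    simp

theorem openNull_nullHomotopic_aux :
    ∀ (n : ℕ) (w : List V), w.length ≤ n → OpenNull w → NullHomotopic w := by
  intro n
  induction n with
  | zero =>
    intro w hlen _
    rw [List.length_eq_zero_iff.mp (Nat.le_zero.mp hlen)]
    exact Relation.ReflTransGen.refl
  | succ n ih =>
    intro w hlen hop
    match w with
    | [] => exact Relation.ReflTransGen.refl
    | [x] =>
      exfalso
      have : nf ([x] ++ [x]) = [x] := hop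
      simp [nf, push] at this
    | [x, y] =>
      exact Relation.ReflTransGen.single (Or.inr ⟨x, y, rfl, rfl⟩)
    | x :: y :: z :: t =>
      set w' : List V := x :: y :: z :: t with hw'
      have hop' : nf (w' ++ [x]) = [x] := hop
      have hnred : ¬ WalkReduced (w' ++ [x]) := by
        intro hred
        rw [nf_fixed hred] at hop'
        have := congrArg List.length hop'
        simp [hw'] at this
      rw [walkReduced_iff] at hnred
      push_neg at hnred
      obtain ⟨l₁, a, b, l₂, hdec⟩ := hnred
      obtain ⟨m, l, hrot⟩ := rot_redex (t := y :: z :: t) hdec (by simp)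
      have h1 : OpenNull (w'.rotate m) := (openNull_rotate w' m).mp hop
      have h2 : OpenNull (a :: l) := by
        show nf ((a :: l) ++ [a]) = [a]
        have h3 : nf ((w'.rotate m) ++ (w'.rotate m).take 1) = (w'.rotate m).take 1 := h1
        rw [hrot] at h3
        have hstep2 : WalkStep ((a :: b :: a :: l) ++ [a]) ((a :: l) ++ [a]) :=
          ⟨[], a, b, l ++ [a], by simp, by simp⟩
        rw [← step_nf_eq hstep2]
        simpa using h3
      have hlen2 : (a :: l).length ≤ n := by
        have := congrArg List.length hrot
        rw [List.length_rotate] at this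
        simp [hw'] at this ⊢
        simp [hw'] at hlen
        omega
      exact Relation.ReflTransGen.head (Or.inl ⟨m, a, b, l, hrot, rfl⟩)
        (ih (a :: l) hlen2 h2)

theorem nullHomotopic_iff_openNull (w : List V) : NullHomotopic w ↔ OpenNull w :=
  ⟨nullHomotopic_openNull, openNull_nullHomotopic_aux w.length w le_rfl⟩

theorem openNull_iff_nf_eq (x : V) (t : List V) (k : ℕ) (hk1 : 1 ≤ k)
    (hk2 : k ≤ (x :: t).length) :
    OpenNull (x :: t) ↔
      nf ((x :: t).take k) = nf (x :: ((x :: t).drop (k - 1)).reverse) := by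
  rcases hd : (x :: t).drop (k - 1) with - | ⟨h, d'⟩
  · exfalso
    rw [List.drop_eq_nil_iff] at hd
    simp at hd hk2
    omega
  have F1 : (x :: t).take k = (x :: t).take (k - 1) ++ [h] := by
    rw [show k = (k - 1) + 1 by omega, List.take_add, hd]
    rfl
  have F2 : (x :: t) ++ [x] = (x :: t).take k ++ (d' ++ [x]) := by
    rw [F1, show ((x :: t).take (k - 1) ++ [h]) ++ (d' ++ [x])
        = ((x :: t).take (k - 1) ++ (h :: d')) ++ [x] by simp, ← hd, List.take_append_drop]
  have hMC : (List.reverse (h :: (d' ++ [x]))).tail = (h :: d').reverse := by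
    rw [show h :: (d' ++ [x]) = (h :: d') ++ [x] by simp, List.reverse_append]
    simp
  have hM : nf ((h :: (d' ++ [x])) ++ (h :: d').reverse) = [h] := by
    rw [← hMC]
    exact nf_cancel h (d' ++ [x])
  have key : nf ((x :: t).take k)
      = nf (((x :: t).take k ++ (d' ++ [x])) ++ (h :: d').reverse) := by
    rw [show ((x :: t).take k ++ (d' ++ [x])) ++ (h :: d').reverse
        = (x :: t).take (k - 1) ++ ((h :: (d' ++ [x])) ++ (h :: d').reverse) by rw [F1]; simp,
      nf_append_nf_right, hM, ← F1]
  have hON : OpenNull (x :: t) ↔ nf ((x :: t).take k ++ (d' ++ [x])) = [x] := by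
    show nf ((x :: t) ++ [x]) = [x] ↔ _
    rw [F2]
  rw [hON]
  constructor
  · intro hab
    rw [key, nf_append_nf_left, hab]
    rfl
  · intro heq
    have hB2 : (List.reverse (x :: (h :: d').reverse)).tail = d' ++ [x] := by
      rw [List.reverse_cons, List.reverse_reverse]
      simp
    have hcan : nf ((x :: (h :: d').reverse) ++ (d' ++ [x])) = [x] := by
      rw [← hB2]
      exact nf_cancel x ((h :: d').reverse)
    calc nf ((x :: t).take k ++ (d' ++ [x]))
        = nf (nf ((x :: t).take k) ++ (d' ++ [x])) := nf_append_nf_left _ _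
      _ = nf ((x :: (h :: d').reverse) ++ (d' ++ [x])) := by rw [heq, ← nf_append_nf_left]
      _ = [x] := hcan

end NHAux

/-- Let `w = u₁,...,uₘ` be a closed walk and, for some `k`, let `w₁ = u₁,u₂,...,u_k` and
`w₂ = u₁,uₘ,u_{m-1},...,u_k`.  Then `w` is null-homotopic if and only if `w₁` and `w₂`
have the same topological retract. -/
theorem nullHomotopic_iff_same_retract {V : Type*} (G : SimpleGraph V) (w : List V)
    (hw : IsClosedWalk G w) (k : ℕ) (hk1 : 1 ≤ k) (hk2 : k ≤ w.length) :
    NullHomotopic w ↔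
      ∃ r : List V,
        Relation.ReflTransGen WalkStep (w.take k) r ∧
        Relation.ReflTransGen WalkStep (w.take 1 ++ (w.drop (k - 1)).reverse) r ∧
        WalkReduced r := by
  letI : DecidableEq V := Classical.decEq V
  obtain ⟨hne, -⟩ := hw
  rcases w with - | ⟨x, t⟩
  · exact absurd rfl hne
  rw [NHAux.nullHomotopic_iff_openNull, NHAux.openNull_iff_nf_eq x t k hk1 hk2]
  constructor
  · intro hEq
    have h4 : Relation.ReflTransGen WalkStep (x :: ((x :: t).drop (k - 1)).reverse)
        (NHAux.nf ((x :: t).take k)) := by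
      rw [hEq]
      exact NHAux.rtg_to_nf _
    exact ⟨_, NHAux.rtg_to_nf _, h4, NHAux.nf_reduced _⟩
  · rintro ⟨r, h1, h2, h3⟩
    rw [NHAux.nf_eq_of_rtg_red h1 h3]
    exact (NHAux.nf_eq_of_rtg_red h2 h3).symm
end
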